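/- There exists ε > 0 such that the closed hyperbolic ε-neighborhoods {z ∈ ℍ : Metric.infDist z C ≤ ε} of the half-circles C(n,k,+) = {z ∈ ℍ : |(z:ℂ) − α(n,k)| = r(n)} and C(n,k,−) = {z ∈ ℍ : |(z:ℂ) + α(n,k)| = r(n)} are pairwise disjoint: for any two distinct triples (n,k,sign) the corresponding closed ε-neighborhoods have empty intersection. -/

import Mathlib

open UpperHalfPlane

noncomputable section

/-- `s k = Σᵢ 2·tᵢ·3ⁱ` where `k = Σᵢ tᵢ·2ⁱ` is the binary expansion of `k`;
equivalently `s 0 = 0`, `s (2j) = 3·(s j)`, `s (2j+1) = 3·(s j) + 2`. -/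
def s : ℕ → ℕ
  | 0 => 0
  | k + 1 =>
    if (k + 1) % 2 = 0 then 3 * s ((k + 1) / 2)
    else 3 * s ((k + 1) / 2) + 2
decreasing_by all_goals (simp_wf; omega)

/-- The midpoint of the middle third removed at stage `n` from the `k`-th interval of
stage `n−1` of the middle-thirds construction on `[1,2]`. -/
def alphaC (n k : ℕ) : ℝ := 1 + (3 * s k + 1) / 3 ^ n + 1 / (2 * 3 ^ n)

/-- The common radius of the half-circles at stage `n`. -/
def radC (n : ℕ) : ℝ := 1 / (4 * 3 ^ n)

/-- The half-circle in `ℍ` of radius `r(n)` centered at `α(n,k)` (sign `true`) or at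
`−α(n,k)` (sign `false`). -/
def halfCircle (n k : ℕ) (sign : Bool) : Set ℍ :=
  if sign then {z : ℍ | ‖(z : ℂ) - (alphaC n k : ℂ)‖ = radC n}
  else {z : ℍ | ‖(z : ℂ) + (alphaC n k : ℂ)‖ = radC n}

/-!
For `w` on a circle `‖w - a‖ = r` with real centre `a`, the comparison of Euclidean and
hyperbolic distance gives `‖z - a‖ ≤ r * exp (dist z w)`. Hence the hyperbolic
`(log 2 / 2)`-neighbourhood of such a half-circle has real parts in `(a - 2r, a + 2r)`, which for
`a = ±α(n,k)` is `±(1 + I)` with `I` the middle third removed at stage `n` of the Cantor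
construction on `[0, 1]`. These gaps are pairwise disjoint: triadic intervals are nested or
disjoint, and a gap nested in an earlier one would force a ternary digit `1` in some `s k`,
whose digits are all `0` or `2`.
-/

open Metric Real Set

lemma s_eq_three_mul_add (k : ℕ) : s k = 3 * s (k / 2) + 2 * (k % 2) := by
  rcases k with _ | m
  · simp [s]
  · rw [s]
    split_ifs <;> omega

lemma s_mod_three (k : ℕ) : s k % 3 = 2 * (k % 2) := by
  rw [s_eq_three_mul_add k]; omega

lemma s_div_three (k : ℕ) : s k / 3 = s (k / 2) := by
  rw [s_eq_three_mul_add k]; omega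

lemma s_div_three_pow (k j : ℕ) : s k / 3 ^ j = s (k / 2 ^ j) := by
  induction j with
  | zero => simp
  | succ j ih => rw [pow_succ, pow_succ, ← Nat.div_div_eq_div_mul, ih, s_div_three,
      Nat.div_div_eq_div_mul]

lemma le_s (k : ℕ) : k ≤ s k := by
  induction k using Nat.strong_induction_on with
  | _ k ih =>
    rcases Nat.eq_zero_or_pos k with rfl | hk
    · exact Nat.zero_le _
    · have := ih (k / 2) (by omega); rw [s_eq_three_mul_add]; omega

lemma s_injective : Function.Injective s := by
  intro k₁ k₂ h
  induction k₁ using Nat.strong_induction_on generalizing k₂ with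
  | _ k₁ ih =>
    have hmod : k₁ % 2 = k₂ % 2 := by
      have := s_mod_three k₁; have := s_mod_three k₂; rw [h] at *; omega
    rcases Nat.eq_zero_or_pos k₁ with rfl | hk
    · have := le_s k₂; simp only [s] at h; omega
    · have hdiv : k₁ / 2 = k₂ / 2 := ih _ (by omega) (by rw [← s_div_three, h, s_div_three])
      omega

-- `p`-adic intervals are nested or disjoint.
lemma nat_div_pow_eq_of_mem_Ioo {p a b n d : ℕ} {x : ℝ} (hp : 0 < p)
    (ha : x ∈ Ioo (a / p ^ n : ℝ) ((a + 1) / p ^ n))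
    (hb : x ∈ Ioo (b / p ^ (n + d) : ℝ) ((b + 1) / p ^ (n + d))) : b / p ^ d = a := by
  have hpn : (0 : ℝ) < p ^ n := by positivity
  rw [mem_Ioo, div_lt_iff₀ hpn, lt_div_iff₀ hpn] at ha
  rw [mem_Ioo, div_lt_iff₀ (by positivity), lt_div_iff₀ (by positivity), pow_add] at hb
  have hlo : ((a * p ^ d : ℕ) : ℝ) < b + 1 := by push_cast; nlinarith
  have hhi : (b : ℝ) < ((a + 1) * p ^ d : ℕ) := by push_cast; nlinarith
  exact Nat.div_eq_of_lt_le (by exact_mod_cast Nat.lt_succ_iff.mp (by exact_mod_cast hlo))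
    (by exact_mod_cast hhi)

/-- The middle third removed at stage `n` from the `k`-th interval of stage `n - 1` of the
middle-thirds construction on `[0, 1]`. -/
def removedInterval (n k : ℕ) : Set ℝ := Ioo ((3 * s k + 1) / 3 ^ n) ((3 * s k + 2) / 3 ^ n)

lemma removedInterval_disjoint_of_le {n₁ k₁ n₂ k₂ : ℕ} (hn : n₁ ≤ n₂)
    (hne : (n₁, k₁) ≠ (n₂, k₂)) : Disjoint (removedInterval n₁ k₁) (removedInterval n₂ k₂) := by
  obtain ⟨d, rfl⟩ := Nat.exists_eq_add_of_le hn
  rw [Set.disjoint_left]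
  intro x h₁ h₂
  unfold removedInterval at h₁ h₂
  have hdiv : (3 * s k₂ + 1) / 3 ^ d = 3 * s k₁ + 1 :=
    nat_div_pow_eq_of_mem_Ioo (x := x) three_pos (by convert h₁ using 3 <;> push_cast <;> ring)
      (by convert h₂ using 3 <;> push_cast <;> ring)
  rcases d with _ | j
  · exact hne (by simp [s_injective (by simpa using hdiv)])
  · have : (3 * s k₂ + 1) / 3 ^ (j + 1) = s (k₂ / 2 ^ j) := by
      rw [pow_succ', ← Nat.div_div_eq_div_mul, ← s_div_three_pow]; congr 1; omega
    have := s_mod_three (k₂ / 2 ^ j)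
    omega

lemma removedInterval_disjoint {n₁ k₁ n₂ k₂ : ℕ} (hne : (n₁, k₁) ≠ (n₂, k₂)) :
    Disjoint (removedInterval n₁ k₁) (removedInterval n₂ k₂) := by
  rcases le_total n₁ n₂ with h | h
  · exact removedInterval_disjoint_of_le h hne
  · exact (removedInterval_disjoint_of_le h hne.symm).symm

lemma norm_sub_le_mul_exp_dist (a : ℝ) (z w : ℍ) :
    ‖(z : ℂ) - a‖ ≤ ‖(w : ℂ) - a‖ * exp (dist z w) := by
  have him : w.im ≤ ‖(w : ℂ) - a‖ := by
    simpa using Complex.abs_im_le_norm ((w : ℂ) - a) |>.trans' (le_abs_self _)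
  have hexp : 0 ≤ exp (dist z w) - 1 := by linarith [one_le_exp (dist_nonneg (x := z) (y := w))]
  calc ‖(z : ℂ) - a‖ ≤ dist (z : ℂ) w + ‖(w : ℂ) - a‖ := by
        rw [dist_eq_norm]; exact norm_sub_le_norm_sub_add_norm_sub _ _ _
    _ ≤ ‖(w : ℂ) - a‖ * (exp (dist z w) - 1) + ‖(w : ℂ) - a‖ := by
        gcongr; exact (dist_coe_le z w).trans (by gcongr)
    _ = ‖(w : ℂ) - a‖ * exp (dist z w) := by ring

lemma re_mem_ball_of_infDist_lt {a r : ℝ} (hr : 0 < r) {z : ℍ}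
    (h : infDist z {w : ℍ | ‖(w : ℂ) - a‖ = r} < log 2) : z.re ∈ ball a (2 * r) := by
  have hne : {w : ℍ | ‖(w : ℂ) - a‖ = r}.Nonempty :=
    ⟨⟨a + r * Complex.I, by simpa using hr⟩, by simp [abs_of_pos hr]⟩
  obtain ⟨w, hw, hzw⟩ := (infDist_lt_iff hne).mp h
  rw [mem_ball, Real.dist_eq]
  calc |z.re - a| ≤ ‖(z : ℂ) - a‖ := by simpa using Complex.abs_re_le_norm ((z : ℂ) - a)
    _ ≤ r * exp (dist z w) := hw ▸ norm_sub_le_mul_exp_dist a z w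
    _ < r * 2 := by gcongr; rwa [← exp_lt_exp, exp_log two_pos] at hzw
    _ = 2 * r := mul_comm _ _

def halfCircleCenter (n k : ℕ) (b : Bool) : ℝ := if b then alphaC n k else -alphaC n k

lemma halfCircle_eq (n k : ℕ) (b : Bool) :
    halfCircle n k b = {w : ℍ | ‖(w : ℂ) - halfCircleCenter n k b‖ = radC n} := by
  cases b <;> simp [halfCircle, halfCircleCenter]

lemma radC_pos (n : ℕ) : 0 < radC n := by unfold radC; positivity

lemma alphaC_sub_two_mul_radC (n k : ℕ) :
    alphaC n k - 2 * radC n = 1 + (3 * s k + 1) / 3 ^ n := by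
  unfold alphaC radC; field_simp; ring

lemma alphaC_add_two_mul_radC (n k : ℕ) :
    alphaC n k + 2 * radC n = 1 + (3 * s k + 2) / 3 ^ n := by
  unfold alphaC radC; field_simp; ring

lemma mem_ball_alphaC_iff {n k : ℕ} {x : ℝ} :
    x ∈ ball (alphaC n k) (2 * radC n) ↔ x - 1 ∈ removedInterval n k := by
  rw [Real.ball_eq_Ioo, alphaC_sub_two_mul_radC, alphaC_add_two_mul_radC, removedInterval,
    mem_Ioo, mem_Ioo]
  constructor <;> rintro ⟨h₁, h₂⟩ <;> constructor <;> linarith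

lemma mem_ball_halfCircleCenter {n k : ℕ} {b : Bool} {x : ℝ}
    (hx : x ∈ ball (halfCircleCenter n k b) (2 * radC n)) :
    (0 < x ↔ b = true) ∧ |x| - 1 ∈ removedInterval n k := by
  have hgap : 1 ≤ alphaC n k - 2 * radC n := by
    rw [alphaC_sub_two_mul_radC]; have : (0 : ℝ) ≤ (3 * s k + 1) / 3 ^ n := by positivity
    linarith
  cases b with
  | true =>
    have hx' := mem_ball_alphaC_iff.mp hx
    rw [halfCircleCenter, if_pos rfl, mem_ball, Real.dist_eq, abs_lt] at hx
    have hpos : 0 < x := by linarith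
    simpa [hpos, abs_of_pos hpos] using hx'
  | false =>
    rw [halfCircleCenter, if_neg Bool.false_ne_true, ← neg_neg x, mem_ball, dist_neg_neg,
      ← mem_ball] at hx
    have hx' := mem_ball_alphaC_iff.mp hx
    rw [mem_ball, Real.dist_eq, abs_lt] at hx
    have hneg : x < 0 := by linarith
    simpa [hneg.not_gt, abs_of_neg hneg] using hx'

lemma disjoint_ball_halfCircleCenter {n₁ k₁ n₂ k₂ : ℕ} {b₁ b₂ : Bool}
    (hne : (n₁, k₁, b₁) ≠ (n₂, k₂, b₂)) :
    Disjoint (ball (halfCircleCenter n₁ k₁ b₁) (2 * radC n₁))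
      (ball (halfCircleCenter n₂ k₂ b₂) (2 * radC n₂)) := by
  rw [Set.disjoint_left]
  intro x h₁ h₂
  obtain ⟨hb₁, hx₁⟩ := mem_ball_halfCircleCenter h₁
  obtain ⟨hb₂, hx₂⟩ := mem_ball_halfCircleCenter h₂
  have hb : b₁ = b₂ := by rw [← Bool.coe_iff_coe, ← hb₁, ← hb₂]
  subst hb
  exact Set.disjoint_left.mp (removedInterval_disjoint (by simpa using hne)) hx₁ hx₂

/-- There is `ε > 0` such that the closed hyperbolic `ε`-neighborhoods of the half-circles
`C(n,k,±)` are pairwise disjoint. -/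
theorem stmt_2 :
    ∃ ε > (0 : ℝ),
      ∀ (n₁ k₁ : ℕ) (b₁ : Bool) (n₂ k₂ : ℕ) (b₂ : Bool),
        1 ≤ n₁ → k₁ < 2 ^ (n₁ - 1) → 1 ≤ n₂ → k₂ < 2 ^ (n₂ - 1) →
        (n₁, k₁, b₁) ≠ (n₂, k₂, b₂) →
        {z : ℍ | Metric.infDist z (halfCircle n₁ k₁ b₁) ≤ ε} ∩
          {z : ℍ | Metric.infDist z (halfCircle n₂ k₂ b₂) ≤ ε} = ∅ := by
  refine ⟨log 2 / 2, by positivity, fun n₁ k₁ b₁ n₂ k₂ b₂ _ _ _ _ hne => ?_⟩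
  have hre : ∀ {z : ℍ} {n k b}, infDist z (halfCircle n k b) ≤ log 2 / 2 →
      z.re ∈ ball (halfCircleCenter n k b) (2 * radC n) := fun h =>
    re_mem_ball_of_infDist_lt (radC_pos _) <| by
      rw [← halfCircle_eq]; linarith [log_pos one_lt_two]
  refine eq_empty_of_forall_notMem fun z ⟨h₁, h₂⟩ => ?_
  exact Set.disjoint_left.mp (disjoint_ball_halfCircleCenter hne) (hre h₁) (hre h₂)
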